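/- arXiv:math/0405096 — 3 statements merged into one kernel-verified Lean document; each statement's English description precedes it below -/
import Mathlib

section
/- With P^{+,l} defined recursively in the Hecke algebra by P^{+,1} = 1 and P^{+,l+1} = P^{+,l}·([l+1]_q)^{−1}(q^{−l}·1 + [l]_q·T_l)·P^{+,l}, one has (P^{+,l})² = P^{+,l} and P^{+,l+1}·T_m = q·P^{+,l+1} = T_m·P^{+,l+1} for every m = 1,…,l. -/
/-!
Write `P' = P · b⁻¹(u + a t) · P` for the step from `P = P^{+,l}` to `P^{+,l+1}`, so `t = T_l`,
`u = q^{-l}`, `a = [l]_q` and `b = [l+1]_q = q a + u`. Everything rests on one quadratic relation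
for `P t`: `a (P t P t) = a q (P t P) + u (q P − P t)`. For `P = 1` it is the Hecke relation; in
general one writes the middle `P` as `Q X Q`, with `Q = P^{+,l-1}` and `X` a combination of `1`
and `s = T_{l-1}`, moves `t` past `Q`, and uses `t s t = s t s` and `P s = q P`. From the relation,
`P' t = q P'` by expansion, and then `P' P' = P' b⁻¹(u + a t) P = b⁻¹(u + a q) P' = P'`.
Absorption on the left is absorption on the right in the opposite algebra, where the relations
and the recursion read the same.
-/

/-- The symmetric q-number `[m]_q = (q^m − q^{−m})/(q − q⁻¹)`. -/
noncomputable def qnum (q : ℝ) (m : ℕ) : ℝ := (q ^ (m : ℤ) - q ^ (-(m : ℤ))) / (q - q⁻¹)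

/-- The q-symmetrizers in the Hecke algebra: `P^{+,1} = 1` and
`P^{+,l+1} = P^{+,l} · [l+1]_q⁻¹ (q^{−l}·1 + [l]_q T_l) · P^{+,l}`. -/
noncomputable def symP {A : Type*} [Ring A] [Algebra ℝ A] (q : ℝ) (T : ℕ → A) :
    ℕ → A
  | 0 => 1
  | l + 1 =>
      symP q T l *
        ((qnum q (l + 1))⁻¹ • ((q ^ (-(l : ℤ)) : ℝ) • (1 : A) + qnum q l • T l)) *
          symP q T l

section QNumber

variable {q : ℝ}

theorem qnum_zero : qnum q 0 = 0 := by simp [qnum]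

theorem sub_inv_ne_zero_of_qnum_ne_zero {m : ℕ} (h : qnum q m ≠ 0) : q - q⁻¹ ≠ 0 := by
  intro h0
  simp [qnum, h0] at h

theorem qnum_one (hq : q - q⁻¹ ≠ 0) : qnum q 1 = 1 := by
  simp [qnum, div_self hq]

theorem qnum_succ (hq : q ≠ 0) (hq' : q - q⁻¹ ≠ 0) (n : ℕ) :
    qnum q (n + 1) = q * qnum q n + q ^ (-(n : ℤ)) := by
  unfold qnum
  rw [mul_div_assoc', div_add' _ _ _ hq']
  congr 1
  push_cast
  rw [zpow_add₀ hq, neg_add, zpow_add₀ hq, zpow_one, zpow_neg_one]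
  field_simp
  ring

theorem zpow_neg_natCast_eq_mul_zpow_neg_succ (hq : q ≠ 0) (n : ℕ) :
    q ^ (-(n : ℤ)) = q * q ^ (-((n + 1 : ℕ) : ℤ)) := by
  rw [Nat.cast_succ, neg_add, zpow_add₀ hq, zpow_neg_one, mul_left_comm, mul_inv_cancel₀ hq,
    mul_one]

end QNumber

section SymmetrizerStep

variable {A : Type*} [Ring A] [Algebra ℝ A] {q : ℝ}

noncomputable def symStep (P t : A) (u a b : ℝ) : A := P * (b⁻¹ • (u • 1 + a • t)) * P

theorem mul_self_eq_of_hecke {t : A} (hq : q ≠ 0)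
    (h : (t - q • (1 : A)) * (t + q⁻¹ • (1 : A)) = 0) : t * t = (q - q⁻¹) • t + 1 := by
  rw [← sub_eq_zero, ← h]
  simp only [sub_mul, mul_add, smul_mul_assoc, mul_smul_comm, one_mul, mul_one]
  match_scalars <;> field_simp; ring

theorem smul_mul_self_eq_of_mul_self {t : A} {a u : ℝ} (hq : q ≠ 0)
    (ht : t * t = (q - q⁻¹) • t + 1) (ha : a = q * u) :
    a • (t * t) = (a * q) • t + u • (q • 1 - t) := by
  rw [ht, ha]
  match_scalars <;> field_simp; ring

theorem smul_symStep_mul_mul_mul_eq {Q s t : A} {a a' u v : ℝ} (hq : q ≠ 0) (ha : a ≠ 0)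
    (hQ : Q * Q = Q) (htQ : Commute t Q) (ht : t * t = (q - q⁻¹) • t + 1)
    (hbraid : t * s * t = s * t * s) (hPs : symStep Q s v a' a * s = q • symStep Q s v a' a)
    (hv : v = q * u) :
    a • (symStep Q s v a' a * t * symStep Q s v a' a * t) =
      (a * q) • (symStep Q s v a' a * t * symStep Q s v a' a) +
        u • (q • symStep Q s v a' a - symStep Q s v a' a * t) := by
  set X := a⁻¹ • (v • (1 : A) + a' • s)
  set P := symStep Q s v a' a with hP
  have hX : a • X = v • 1 + a' • s := smul_inv_smul₀ ha _
  have hPQ : P * Q = P := by rw [hP, symStep, mul_assoc _ Q Q, hQ]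
  have hPtQ : P * t * Q = P * t := by rw [mul_assoc, htQ.eq, ← mul_assoc, hPQ]
  have hPtP : P * t * P = P * t * X * Q := by
    nth_rw 2 [hP]
    simp only [symStep, ← mul_assoc, hPtQ, X]
  have hPtPt : P * t * P * t = P * t * X * t * Q := by
    rw [hPtP, mul_assoc _ Q t, ← htQ.eq, ← mul_assoc]
  have hPtP' : a • (P * t * P) = v • (P * t) + a' • (P * t * s * Q) := by
    rw [hPtP, ← smul_mul_assoc, ← mul_smul_comm, hX]
    simp only [mul_add, add_mul, mul_smul_comm, smul_mul_assoc, mul_one, hPtQ]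
  have hPttQ : P * t * t * Q = (q - q⁻¹) • (P * t) + P := by
    rw [mul_assoc P t t, ht]
    simp only [mul_add, add_mul, mul_smul_comm, smul_mul_assoc, mul_one, hPtQ, hPQ]
  have hPtstQ : P * t * s * t * Q = q • (P * t * s * Q) := by
    rw [mul_assoc P t s, mul_assoc P (t * s) t, hbraid]
    simp only [← mul_assoc, hPs, smul_mul_assoc]
  have hPtPt' : a • (P * t * P * t) =
      (v * (q - q⁻¹)) • (P * t) + v • P + (a' * q) • (P * t * s * Q) := by
    rw [hPtPt, ← smul_mul_assoc, ← smul_mul_assoc, ← mul_smul_comm, hX]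
    simp only [mul_add, add_mul, mul_smul_comm, smul_mul_assoc, mul_one]
    rw [hPttQ, hPtstQ]
    module
  rw [hPtPt', mul_comm a q, mul_smul q a, hPtP', hv]
  match_scalars <;> field_simp; ring

theorem symStep_mul_eq_smul {P t : A} {u a b : ℝ} (hP : P * P = P)
    (hrel : a • (P * t * P * t) = (a * q) • (P * t * P) + u • (q • P - P * t)) :
    symStep P t u a b * t = q • symStep P t u a b := by
  simp only [symStep, mul_add, add_mul, mul_smul_comm, smul_mul_assoc, mul_one, hP]
  rw [hrel]
  module

theorem symStep_mul_self {P t : A} {u a b : ℝ} (hP : P * P = P) (hb : b = q * a + u)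
    (hb0 : b ≠ 0) (habs : symStep P t u a b * t = q • symStep P t u a b) :
    symStep P t u a b * symStep P t u a b = symStep P t u a b := by
  set P' := symStep P t u a b with hP'
  have hP'P : P' * P = P' := by simp only [hP', symStep, mul_assoc, hP]
  calc P' * P'
      = b⁻¹ • (u • P' + a • (P' * t)) * P := by
        nth_rw 2 [hP']
        simp only [symStep, ← mul_assoc, hP'P, mul_add, mul_smul_comm, mul_one, smul_mul_assoc]
    _ = (b⁻¹ * (q * a + u)) • (P' * P) := by
        rw [habs]
        simp only [add_mul, smul_mul_assoc]
        module
    _ = P' := by rw [← hb, inv_mul_cancel₀ hb0, one_smul, hP'P]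

end SymmetrizerStep

section Symmetrizer

variable {A : Type*} [Ring A] [Algebra ℝ A] {q : ℝ} {T : ℕ → A}

structure IsHeckeFamily (q : ℝ) (T : ℕ → A) : Prop where
  mul_self : ∀ i, 1 ≤ i → T i * T i = (q - q⁻¹) • T i + 1
  braid : ∀ i, 1 ≤ i → T i * T (i + 1) * T i = T (i + 1) * T i * T (i + 1)
  commute : ∀ i j, 1 ≤ i → i + 2 ≤ j → Commute (T i) (T j)

theorem IsHeckeFamily.op (hT : IsHeckeFamily q T) :
    IsHeckeFamily q (fun i => MulOpposite.op (T i)) where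
  mul_self i hi := by
    rw [← MulOpposite.op_mul, hT.mul_self i hi]
    simp
  braid i hi := by simp only [← MulOpposite.op_mul, ← mul_assoc, hT.braid i hi]
  commute i j hi hj := (hT.commute i j hi hj).op

theorem symP_succ (q : ℝ) (T : ℕ → A) (l : ℕ) :
    symP q T (l + 1) = symStep (symP q T l) (T l) (q ^ (-(l : ℤ))) (qnum q l) (qnum q (l + 1)) :=
  rfl

theorem symP_op (q : ℝ) (T : ℕ → A) (l : ℕ) :
    symP q (fun i => MulOpposite.op (T i)) l = MulOpposite.op (symP q T l) := by
  induction l with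
  | zero => rfl
  | succ l ih => simp [symP, ih, mul_assoc]

theorem symP_one (hq : q - q⁻¹ ≠ 0) : symP q T 1 = 1 := by
  simp [symP, qnum_zero, qnum_one hq]

theorem commute_symP {x : A} (l : ℕ) (hx : ∀ i, 1 ≤ i → i < l → Commute x (T i)) :
    Commute x (symP q T l) := by
  induction l with
  | zero => exact Commute.one_right x
  | succ l ih =>
    have hQ : Commute x (symP q T l) := ih fun i hi hil => hx i hi (by omega)
    have hs : Commute x (qnum q l • T l) := by
      rcases Nat.eq_zero_or_pos l with rfl | hl
      · simp [qnum_zero]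
      · exact (hx l hl l.lt_succ_self).smul_right _
    exact (hQ.mul_right
      ((((Commute.one_right x).smul_right _).add_right hs).smul_right _)).mul_right hQ

theorem IsHeckeFamily.symP_mul_self_and_symP_mul (hT : IsHeckeFamily q T) (hq : q ≠ 0)
    (hqn : ∀ m, 1 ≤ m → qnum q m ≠ 0) (l : ℕ) :
    symP q T l * symP q T l = symP q T l ∧
      ∀ m, 1 ≤ m → m < l → symP q T l * T m = q • symP q T l := by
  have hq' : q - q⁻¹ ≠ 0 := sub_inv_ne_zero_of_qnum_ne_zero (hqn 1 le_rfl)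
  induction l using Nat.twoStepInduction with
  | zero => exact ⟨mul_one 1, fun m hm hm0 => absurd hm0 (by omega)⟩
  | one => exact ⟨by rw [symP_one hq', mul_one], fun m hm hm1 => absurd hm1 (by omega)⟩
  | more l ihQ ihP =>
    obtain ⟨hPP, hPT⟩ := ihP
    set P := symP q T (l + 1)
    set t := T (l + 1)
    have hrel : qnum q (l + 1) • (P * t * P * t) =
        (qnum q (l + 1) * q) • (P * t * P) + q ^ (-((l + 1 : ℕ) : ℤ)) • (q • P - P * t) := by
      rcases Nat.eq_zero_or_pos l with rfl | hl
      -- `symP q T 1 = 1`; the general step would need relations for `T 0`.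
      · simp only [P, symP_one hq', one_mul, mul_one]
        refine smul_mul_self_eq_of_mul_self hq (hT.mul_self 1 le_rfl) ?_
        rw [qnum_one hq', zero_add, Nat.cast_one, zpow_neg_one, mul_inv_cancel₀ hq]
      · exact smul_symStep_mul_mul_mul_eq hq (hqn (l + 1) (by omega)) ihQ.1
          (commute_symP l fun i hi hil => (hT.commute i (l + 1) hi (by omega)).symm)
          (hT.mul_self (l + 1) (by omega)) (hT.braid l hl).symm (hPT l hl (by omega))
          (zpow_neg_natCast_eq_mul_zpow_neg_succ hq l)
    have habs : symP q T (l + 2) * t = q • symP q T (l + 2) := symStep_mul_eq_smul hPP hrel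
    refine ⟨symStep_mul_self hPP (qnum_succ hq hq' (l + 1)) (hqn (l + 2) (by omega)) habs,
      fun m hm hml => ?_⟩
    rcases Nat.lt_succ_iff_lt_or_eq.mp hml with hml | rfl
    · rw [symP_succ, symStep, mul_assoc, hPT m hm hml, mul_smul_comm]
    · exact habs

theorem IsHeckeFamily.mul_symP (hT : IsHeckeFamily q T) (hq : q ≠ 0)
    (hqn : ∀ m, 1 ≤ m → qnum q m ≠ 0) {l m : ℕ} (hm : 1 ≤ m) (hml : m < l) :
    T m * symP q T l = q • symP q T l := by
  apply MulOpposite.op_injective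
  rw [MulOpposite.op_mul, MulOpposite.op_smul, ← symP_op]
  exact (hT.op.symP_mul_self_and_symP_mul hq hqn l).2 m hm hml

end Symmetrizer

/-- The q-symmetrizers are idempotent and absorb the generators:
`P^{+,l+1} T_m = q·P^{+,l+1} = T_m P^{+,l+1}` for `1 ≤ m ≤ l`. -/
theorem symP_idem_absorb {A : Type*} [Ring A] [Algebra ℝ A] (q : ℝ) (hq : q ≠ 0)
    (hqn : ∀ m : ℕ, 1 ≤ m → qnum q m ≠ 0) (T : ℕ → A)
    (hbraid : ∀ i : ℕ, 1 ≤ i → T i * T (i + 1) * T i = T (i + 1) * T i * T (i + 1))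
    (hfar : ∀ i j : ℕ, 1 ≤ i → i + 2 ≤ j → T i * T j = T j * T i)
    (hhecke : ∀ i : ℕ, 1 ≤ i → (T i - q • (1 : A)) * (T i + q⁻¹ • (1 : A)) = 0) :
    (∀ l : ℕ, symP q T l * symP q T l = symP q T l) ∧
      (∀ l m : ℕ, 1 ≤ m → m ≤ l →
        symP q T (l + 1) * T m = q • symP q T (l + 1) ∧
          T m * symP q T (l + 1) = q • symP q T (l + 1)) := by
  have hT : IsHeckeFamily q T :=
    ⟨fun i hi => mul_self_eq_of_hecke hq (hhecke i hi), hbraid, hfar⟩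
  refine ⟨fun l => (hT.symP_mul_self_and_symP_mul hq hqn l).1, fun l m hm hml => ⟨?_, ?_⟩⟩
  · exact (hT.symP_mul_self_and_symP_mul hq hqn (l + 1)).2 m hm (Nat.lt_succ_of_le hml)
  · exact hT.mul_symP hq hqn hm (Nat.lt_succ_of_le hml)
end

section
/- The q-epsilon tensor ε^{i_1…i_N} of GL_q(N) (equal to (−q)^{l(I)} on permutations I of (1,…,N) and 0 otherwise) satisfies the q-cyclic property ε^{i_1 i_2 … i_N} = (−1)^{N−1} U^{i_1}_{j} · ε^{i_2 … i_N j}, where U^i_j = δ^i_j · q^{2i−N−1}. -/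
/-- Number of inversions of a tuple `I`. -/
def invCount {N : ℕ} (I : Fin N → Fin N) : ℕ :=
  (Finset.univ.filter fun p : Fin N × Fin N => p.1 < p.2 ∧ I p.2 < I p.1).card

/-- The `U_q gl(N)`-covariant epsilon tensor: `(−q)^{l(I)}` on permutations, `0` otherwise. -/
noncomputable def epsGL {N : ℕ} (q : ℝ) (I : Fin N → Fin N) : ℝ :=
  if Function.Injective I then (-q) ^ invCount I else 0

lemma card_filter_mem {N : ℕ} {I : Fin N → Fin N} (hI : Function.Injective I)
    (t : Finset (Fin N)) :
    (Finset.univ.filter fun k => I k ∈ t).card = t.card := by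
  apply Finset.card_bij (fun k _ => I k)
  · intro a ha; simpa using (Finset.mem_filter.mp ha).2
  · intro a _ b _ h; exact hI h
  · intro b hb
    obtain ⟨a, ha⟩ := (Finite.injective_iff_surjective.mp hI) b
    exact ⟨a, by simp [ha, hb], ha⟩

/-- The q-cyclic property
`ε^{i₁ i₂ … i_N} = (−1)^{N−1} U^{i₁}_j ε^{i₂ … i_N j}` with `U^i_j = δ^i_j q^{2i−N−1}`
(indices `1,…,N` correspond to the 0-based values shifted by one). -/
theorem epsGL_cyclic (N : ℕ) (hN : 0 < N) (q : ℝ) (hq : q ≠ 0)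
    (i : Fin N → Fin N) :
    epsGL q i =
      (-1 : ℝ) ^ (N - 1) *
        ∑ j : Fin N,
          (if j = i ⟨0, hN⟩ then
              q ^ (2 * ((i ⟨0, hN⟩ : ℕ) : ℤ) + 1 - (N : ℤ))
            else 0) *
            epsGL q (fun k =>
              if h : (k : ℕ) + 1 < N then i ⟨(k : ℕ) + 1, h⟩ else j) := by
  set z : Fin N := ⟨0, hN⟩ with hz
  set i' : Fin N → Fin N :=
    fun k => if h : (k : ℕ) + 1 < N then i ⟨(k : ℕ) + 1, h⟩ else i z with hi'def
  set E : ℤ := 2 * ((i z : ℕ) : ℤ) + 1 - (N : ℤ) with hE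
  -- collapse the sum
  have hsum : (∑ j : Fin N,
      (if j = i z then q ^ E else 0) *
        epsGL q (fun k => if h : (k : ℕ) + 1 < N then i ⟨(k : ℕ) + 1, h⟩ else j))
      = q ^ E * epsGL q i' := by
    rw [Finset.sum_eq_single (i z)]
    · rw [if_pos rfl]
    · intro b _ hb; rw [if_neg hb, zero_mul]
    · intro h; exact absurd (Finset.mem_univ _) h
  rw [hsum]
  -- the rotation map
  set c : Fin N → Fin N := fun k => if h : (k : ℕ) + 1 < N then ⟨(k : ℕ) + 1, h⟩ else z
    with hc
  have hcomp : i' = i ∘ c := by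
    funext k
    simp only [hi'def, hc, Function.comp]
    by_cases h : (k : ℕ) + 1 < N
    · rw [dif_pos h, dif_pos h]
    · rw [dif_neg h, dif_neg h]
  have hcval : ∀ k : Fin N, (c k : ℕ) = if (k : ℕ) + 1 < N then (k : ℕ) + 1 else 0 := by
    intro k
    by_cases h : (k : ℕ) + 1 < N
    · simp [hc, h]
    · simp [hc, h, hz]
  have hcinj : Function.Injective c := by
    intro a b hab
    have h1 := congrArg Fin.val hab
    rw [hcval, hcval] at h1
    have ha := a.isLt; have hb := b.isLt
    apply Fin.ext
    split_ifs at h1 <;> omega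
  have hinj_iff : Function.Injective i' ↔ Function.Injective i := by
    constructor
    · intro h a b hab
      obtain ⟨a', rfl⟩ := (Finite.injective_iff_surjective.mp hcinj) a
      obtain ⟨b', rfl⟩ := (Finite.injective_iff_surjective.mp hcinj) b
      have : i' a' = i' b' := by rw [hcomp]; exact hab
      exact congrArg c (h this)
    · intro h; rw [hcomp]; exact h.comp hcinj
  by_cases hi : Function.Injective i
  · -- main case
    have hi'inj : Function.Injective i' := hinj_iff.mpr hi
    have hi'val : ∀ (k : Fin N) (h : (k : ℕ) + 1 < N), i' k = i ⟨(k : ℕ) + 1, h⟩ :=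
      fun k h => dif_pos h
    set last : Fin N := ⟨N - 1, by omega⟩ with hlastdef
    have hlast : i' last = i z := by
      show (if h : (N - 1 : ℕ) + 1 < N then i ⟨(N - 1) + 1, h⟩ else i z) = i z
      rw [dif_neg (by omega)]
    set a : ℕ := (i z : ℕ) with hadef
    have haN : a < N := (i z).isLt
    set C : ℕ := (Finset.univ.filter fun p : Fin N × Fin N =>
      (p.1 < p.2 ∧ i p.2 < i p.1) ∧ ¬ p.1 = z).card with hC
    -- invCount i = a + C
    have hA : invCount i = a + C := by
      have hsplit := Finset.card_filter_add_card_filter_not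
        (s := Finset.univ.filter fun p : Fin N × Fin N => p.1 < p.2 ∧ i p.2 < i p.1)
        (p := fun p => p.1 = z)
      rw [Finset.filter_filter, Finset.filter_filter] at hsplit
      have h1 : (Finset.univ.filter fun p : Fin N × Fin N =>
          (p.1 < p.2 ∧ i p.2 < i p.1) ∧ p.1 = z).card = a := by
        rw [hadef, ← Fin.card_Iio (i z), ← card_filter_mem hi (Finset.Iio (i z))]
        refine Finset.card_bij' (fun p _ => p.2) (fun k _ => (z, k)) ?_ ?_ ?_ ?_
        · intro p hp
          simp only [Finset.mem_filter, Finset.mem_univ, true_and] at hp ⊢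
          rw [Finset.mem_Iio, ← hp.2]
          exact hp.1.2
        · intro k hk
          simp only [Finset.mem_filter, Finset.mem_univ, true_and, Finset.mem_Iio] at hk ⊢
          have hkz : k ≠ z := by
            intro h; rw [h] at hk; exact absurd hk (lt_irrefl _)
          have hk0 : (k : ℕ) ≠ 0 := fun h => hkz (Fin.ext h)
          exact ⟨⟨by rw [Fin.lt_def]; simp only [hz]; omega, hk⟩, trivial⟩
        · intro p hp
          simp only [Finset.mem_filter] at hp
          rw [Prod.ext_iff]
          exact ⟨hp.2.2.symm, rfl⟩
        · intro k _; rfl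
      rw [invCount, ← hsplit, h1]
    -- invCount i' = (N - 1 - a) + C
    have hB : invCount i' = (N - 1 - a) + C := by
      have hsplit := Finset.card_filter_add_card_filter_not
        (s := Finset.univ.filter fun p : Fin N × Fin N => p.1 < p.2 ∧ i' p.2 < i' p.1)
        (p := fun p => p.2 = last)
      rw [Finset.filter_filter, Finset.filter_filter] at hsplit
      have h1 : (Finset.univ.filter fun p : Fin N × Fin N =>
          (p.1 < p.2 ∧ i' p.2 < i' p.1) ∧ p.2 = last).card = N - 1 - a := by
        rw [hadef, ← Fin.card_Ioi (i z), ← card_filter_mem hi'inj (Finset.Ioi (i z))]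
        refine Finset.card_bij' (fun p _ => p.1) (fun k _ => (k, last)) ?_ ?_ ?_ ?_
        · intro p hp
          simp only [Finset.mem_filter, Finset.mem_univ, true_and] at hp ⊢
          rw [Finset.mem_Ioi, ← hlast, ← hp.2]
          exact hp.1.2
        · intro k hk
          simp only [Finset.mem_filter, Finset.mem_univ, true_and, Finset.mem_Ioi] at hk ⊢
          rw [← hlast] at hk
          have hkl : k ≠ last := by
            intro h; rw [h] at hk; exact absurd hk (lt_irrefl _)
          have hk0 : (k : ℕ) ≠ N - 1 := fun h => hkl (Fin.ext h)
          have hkN := k.isLt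
          exact ⟨⟨by rw [Fin.lt_def]; simp only [hlastdef]; omega, hk⟩, trivial⟩
        · intro p hp
          simp only [Finset.mem_filter] at hp
          rw [Prod.ext_iff]
          exact ⟨rfl, hp.2.2.symm⟩
        · intro k _; rfl
      have h2 : (Finset.univ.filter fun p : Fin N × Fin N =>
          (p.1 < p.2 ∧ i' p.2 < i' p.1) ∧ ¬ p.2 = last).card = C := by
        rw [hC]
        have hmem : ∀ p : Fin N × Fin N, p ∈ (Finset.univ.filter fun p : Fin N × Fin N =>
            (p.1 < p.2 ∧ i' p.2 < i' p.1) ∧ ¬ p.2 = last) →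
            (p.1 : ℕ) + 1 < N ∧ (p.2 : ℕ) + 1 < N := by
          intro p hp
          simp only [Finset.mem_filter, Fin.lt_def, Fin.ext_iff, hlastdef] at hp
          have := p.2.isLt
          omega
        refine Finset.card_bij'
          (fun p hp => ((⟨(p.1 : ℕ) + 1, (hmem p hp).1⟩ : Fin N),
            (⟨(p.2 : ℕ) + 1, (hmem p hp).2⟩ : Fin N)))
          (fun p _ => ((⟨(p.1 : ℕ) - 1, Nat.lt_of_le_of_lt (Nat.sub_le _ _) p.1.isLt⟩ : Fin N),
            (⟨(p.2 : ℕ) - 1, Nat.lt_of_le_of_lt (Nat.sub_le _ _) p.2.isLt⟩ : Fin N)))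
          ?_ ?_ ?_ ?_
        · intro p hp
          have hm := hmem p hp
          simp only [Finset.mem_filter, Finset.mem_univ, true_and] at hp ⊢
          obtain ⟨⟨hlt, hv⟩, _⟩ := hp
          rw [hi'val p.1 hm.1, hi'val p.2 hm.2] at hv
          refine ⟨⟨?_, hv⟩, ?_⟩
          · rw [Fin.lt_def] at hlt ⊢; simpa using Nat.succ_lt_succ hlt
          · simp only [Fin.ext_iff, hz]
            omega
        · intro p hp
          simp only [Finset.mem_filter, Finset.mem_univ, true_and, Fin.ext_iff, hz,
            Fin.lt_def, hlastdef] at hp ⊢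
          obtain ⟨⟨hlt, hv⟩, hne⟩ := hp
          have h1N := p.1.isLt; have h2N := p.2.isLt
          have hb1 : ((p.1 : ℕ) - 1) + 1 < N := by omega
          have hb2 : ((p.2 : ℕ) - 1) + 1 < N := by omega
          refine ⟨⟨by omega, ?_⟩, by omega⟩
          rw [hi'val _ hb2, hi'val _ hb1]
          have e1 : (⟨((p.1 : ℕ) - 1) + 1, hb1⟩ : Fin N) = p.1 := Fin.ext (by simp; omega)
          have e2 : (⟨((p.2 : ℕ) - 1) + 1, hb2⟩ : Fin N) = p.2 := Fin.ext (by simp; omega)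
          rw [e1, e2]; exact hv
        · intro p hp
          rw [Prod.ext_iff]
          constructor <;> (apply Fin.ext; simp)
        · intro p hp
          simp only [Finset.mem_filter, Finset.mem_univ, true_and, Fin.ext_iff, hz,
            Fin.lt_def] at hp
          have h1N := p.1.isLt
          rw [Prod.ext_iff]
          constructor <;> (apply Fin.ext; simp; omega)
      rw [invCount, ← hsplit, h1, h2]
    -- final computation
    rw [epsGL, epsGL, if_pos hi, if_pos hi'inj, hA, hB]
    have hq1 : (q : ℝ) ^ E * q ^ (((N - 1 - a + C : ℕ) : ℤ)) = q ^ ((a + C : ℕ) : ℤ) := by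
      rw [← zpow_add₀ hq]
      congr 1
      rw [hE, hadef]
      omega
    have hs1 : ((-1 : ℝ)) ^ (N - 1) * (-1) ^ (N - 1 - a + C) = (-1) ^ (a + C) := by
      rw [← pow_add]
      have h : (N - 1) + (N - 1 - a + C) = (a + C) + 2 * (N - 1 - a) := by omega
      rw [h, pow_add, pow_mul, neg_one_sq, one_pow, mul_one]
    calc (-q) ^ (a + C) = (-1) ^ (a + C) * q ^ (a + C) := by rw [neg_pow]
      _ = ((-1) ^ (N - 1) * (-1) ^ (N - 1 - a + C)) * (q ^ E * q ^ ((N - 1 - a + C : ℕ) : ℤ)) := by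
          rw [hs1, hq1, zpow_natCast]
      _ = (-1 : ℝ) ^ (N - 1) * (q ^ E * (-q) ^ (N - 1 - a + C)) := by
          rw [zpow_natCast, neg_pow]; ring
  · -- non-injective case
    have hi'ninj : ¬ Function.Injective i' := fun h => hi (hinj_iff.mp h)
    rw [epsGL, epsGL, if_neg hi, if_neg hi'ninj, mul_zero, mul_zero]
end

section
/- Define for 0 ≤ p ≤ N the constants c_p := (1/[N−p]_q!) · Π_{l=p}^{N−1} (q^{l−N/2} + q^{N/2−l})/(q^{1−N/2} + q^{N/2−1}) and d_p := d_0 · ([N]_q!/([p]_q!·[N−p]_q!)) · (q^{p−N/2} + q^{N/2−p})/(q^{−N/2} + q^{N/2}) with d_0 := c_0 (so that c_N = 1). Then c_p · c_{N−p} = d_p for all 0 ≤ p ≤ N. -/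
/-- The q-factorial `[m]_q! = [1]_q [2]_q ⋯ [m]_q`. -/
noncomputable def qfact (q : ℝ) (m : ℕ) : ℝ := ∏ k ∈ Finset.range m, qnum q (k + 1)

/-- The Hodge-map normalization constants
`c_p = (1/[N−p]_q!) Π_{l=p}^{N−1} (q^{l−N/2}+q^{N/2−l})/(q^{1−N/2}+q^{N/2−1})`. -/
noncomputable def cHodge (N : ℕ) (q : ℝ) (p : ℕ) : ℝ :=
  (qfact q (N - p))⁻¹ *
    ∏ l ∈ Finset.Ico p N,
      (q ^ ((l : ℝ) - (N : ℝ) / 2) + q ^ ((N : ℝ) / 2 - (l : ℝ))) /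
        (q ^ (1 - (N : ℝ) / 2) + q ^ ((N : ℝ) / 2 - 1))

/-- `d_p = d₀ ([N]_q!/([p]_q![N−p]_q!)) (q^{p−N/2}+q^{N/2−p})/(q^{−N/2}+q^{N/2})`
with `d₀ = c₀`. -/
noncomputable def dHodge (N : ℕ) (q : ℝ) (p : ℕ) : ℝ :=
  cHodge N q 0 * (qfact q N / (qfact q p * qfact q (N - p))) *
    ((q ^ ((p : ℝ) - (N : ℝ) / 2) + q ^ ((N : ℝ) / 2 - (p : ℝ))) /
      (q ^ (-((N : ℝ) / 2)) + q ^ ((N : ℝ) / 2)))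

/-! The factor `g l = (q^{l−N/2} + q^{N/2−l}) / (q^{1−N/2} + q^{N/2−1})` of `c_p` satisfies
`g (N − l) = g l`, so the reflection `l ↦ N − l` turns `∏_{l=N−p}^{N−1} g l` into
`∏_{l=1}^{p} g l = ∏_{l=0}^{p−1} g l · g p / g 0`. Hence `c_p c_{N−p}` is
`∏_{l=0}^{N−1} g l · g p / g 0` over `[p]_q! [N−p]_q!`, which is `d_p` once the non-zero
`[N]_q!` cancels. -/

open Finset

theorem Finset.prod_Ico_mul_prod_Ico_tsub_of_symm {M : Type*} [CommMonoid M] {f : ℕ → M}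
    {N p : ℕ} (hp : p ≤ N) (hf : ∀ l ≤ N, f (N - l) = f l) :
    (∏ l ∈ Ico p N, f l) * (∏ l ∈ Ico (N - p) N, f l) * f 0 = (∏ l ∈ range N, f l) * f p := by
  have reflect : ∏ l ∈ Ico (N - p) N, f l = ∏ l ∈ Ico 1 (p + 1), f l := by
    have h := prod_Ico_reflect f 1 (by omega : p + 1 ≤ N + 1)
    simp only [Nat.add_sub_add_right, Nat.add_sub_cancel] at h
    rw [← h]
    exact prod_congr rfl fun l hl => hf l (by simp only [mem_Ico] at hl; omega)
  rw [reflect, mul_assoc, mul_comm _ (f 0), ← prod_eq_prod_Ico_succ_bot p.succ_pos,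
    prod_Ico_succ_top p.zero_le, Nat.Ico_zero_eq_range, ← prod_range_mul_prod_Ico f hp]
  ac_rfl

lemma zpow_sub_zpow_neg_ne_zero {K : Type*} [Field K] [LinearOrder K] [IsStrictOrderedRing K]
    {q : K} (hq : 0 < q) (hq1 : q ≠ 1) {m : ℤ} (hm : m ≠ 0) :
    q ^ m - q ^ (-m) ≠ 0 :=
  sub_ne_zero.mpr fun h => hm (by have := zpow_right_injective₀ hq hq1 h; omega)

lemma qnum_ne_zero {q : ℝ} (hq : 0 < q) (hq1 : q ≠ 1) {m : ℕ} (hm : m ≠ 0) : qnum q m ≠ 0 := by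
  have hden : q - q⁻¹ ≠ 0 := by
    simpa using zpow_sub_zpow_neg_ne_zero hq hq1 one_ne_zero
  exact div_ne_zero (zpow_sub_zpow_neg_ne_zero hq hq1 (by exact_mod_cast hm)) hden

lemma qfact_ne_zero {q : ℝ} (hq : 0 < q) (hq1 : q ≠ 1) (m : ℕ) : qfact q m ≠ 0 :=
  prod_ne_zero_iff.mpr fun k _ => qnum_ne_zero hq hq1 k.succ_ne_zero

noncomputable def hodgeFactor (N : ℕ) (q : ℝ) (l : ℕ) : ℝ :=
  (q ^ ((l : ℝ) - (N : ℝ) / 2) + q ^ ((N : ℝ) / 2 - (l : ℝ))) /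
    (q ^ (1 - (N : ℝ) / 2) + q ^ ((N : ℝ) / 2 - 1))

lemma hodgeFactor_pos {q : ℝ} (hq : 0 < q) (N l : ℕ) : 0 < hodgeFactor N q l := by
  unfold hodgeFactor; positivity

lemma hodgeFactor_tsub (N : ℕ) (q : ℝ) {l : ℕ} (hl : l ≤ N) :
    hodgeFactor N q (N - l) = hodgeFactor N q l := by
  unfold hodgeFactor
  rw [Nat.cast_sub hl, add_comm (q ^ _)]
  ring_nf

lemma cHodge_eq_prod_hodgeFactor (N : ℕ) (q : ℝ) (p : ℕ) :
    cHodge N q p = (qfact q (N - p))⁻¹ * ∏ l ∈ Ico p N, hodgeFactor N q l := rfl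

lemma dHodge_eq_hodgeFactor_div {q : ℝ} (hq : 0 < q) (N p : ℕ) :
    dHodge N q p = cHodge N q 0 * (qfact q N / (qfact q p * qfact q (N - p))) *
      (hodgeFactor N q p / hodgeFactor N q 0) := by
  have hden : q ^ (1 - (N : ℝ) / 2) + q ^ ((N : ℝ) / 2 - 1) ≠ 0 := by positivity
  simp only [dHodge, hodgeFactor, div_div_div_cancel_right₀ hden, Nat.cast_zero, zero_sub,
    sub_zero]

/-- The normalization condition `c_p · c_{N−p} = d_p`. -/
theorem cHodge_mul (N : ℕ) (q : ℝ) (hq : 0 < q) (hq1 : q ≠ 1)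
    (p : ℕ) (hp : p ≤ N) :
    cHodge N q p * cHodge N q (N - p) = dHodge N q p := by
  have hprod := prod_Ico_mul_prod_Ico_tsub_of_symm hp fun l hl => hodgeFactor_tsub N q hl
  have hfact := qfact_ne_zero hq hq1
  have hg0 := (hodgeFactor_pos hq N 0).ne'
  rw [dHodge_eq_hodgeFactor_div hq, cHodge_eq_prod_hodgeFactor, cHodge_eq_prod_hodgeFactor,
    cHodge_eq_prod_hodgeFactor, Nat.sub_sub_self hp, Nat.sub_zero, Nat.Ico_zero_eq_range]
  field_simp
  rw [hprod, div_eq_div_iff (by simp [hfact]) (by simp [hfact])]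
  ring
end
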